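/- arXiv:1107.0393 — 3 statements merged into one kernel-verified Lean document; each statement's English description precedes it below -/
import Mathlib

section
/- Let Ω ⊆ ℂ be open and F ⊆ Ω relatively closed with no holes in Ω. Then F is an Arakelian set in Ω if and only if for every compact K ⊆ Ω, the union of all holes of F ∪ K in Ω is contained in a compact subset of Ω. -/
open Topology Filter Set

noncomputable section

/-- The complement of (the image of) `V ⊆ ℂ` in the Riemann sphere `ℂ ∪ {∞}`. -/
def sphereCompl (V : Set ℂ) : Set (OnePoint ℂ) := (OnePoint.some '' V)ᶜ

/-- The complement `(Ω ∪ {α}) \ F` in the one point compactification of `Ω`. -/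
def ocCompl (Ω F : Set ℂ) : Set (OnePoint Ω) :=
  (OnePoint.some '' {x : Ω | (x : ℂ) ∈ F})ᶜ

/-- `S` is locally connected at the point `a`. -/
def LocConnAt {X : Type*} [TopologicalSpace X] (S : Set X) (a : X) : Prop :=
  ∀ U ∈ 𝓝 a, ∃ W ∈ 𝓝 a, W ⊆ U ∧ IsConnected (W ∩ S)

/-- `F` is a relatively closed subset of `Ω`. -/
def RelClosed (Ω F : Set ℂ) : Prop :=
  F ⊆ Ω ∧ IsClosed ((fun x : Ω => (x : ℂ)) ⁻¹' F)

/-- `B` is a hole of `E` in `Ω`: a connected component of `Ω \ E` contained in a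
compact subset of `Ω`. -/
def IsHole (Ω E B : Set ℂ) : Prop :=
  (∃ x ∈ Ω \ E, B = connectedComponentIn (Ω \ E) x) ∧
  ∃ K : Set ℂ, IsCompact K ∧ K ⊆ Ω ∧ B ⊆ K

/-- The union of all holes of `E` in `Ω`. -/
def holesUnion (Ω E : Set ℂ) : Set ℂ := ⋃₀ {B | IsHole Ω E B}

/-- `F` is an Arakelian set in `Ω`: relatively closed, with `(Ω ∪ {α}) \ F`
connected and locally connected at `α`. -/
def ArakelianIn (Ω F : Set ℂ) : Prop :=
  RelClosed Ω F ∧ IsConnected (ocCompl Ω F) ∧ LocConnAt (ocCompl Ω F) OnePoint.infty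


/-!
Work in the one-point compactification of the subspace `Ω`, where the basic neighbourhoods of
`α = ∞` are the complements of compact sets `K`. A connected component of `Ω \ E` has `∞` in its
closure exactly when it is not contained in a compact set, so adding `∞` to an open set without
holes gives a connected set; this yields the connectedness of `(Ω ∪ {α}) \ F`. Removing from the
neighbourhood of `∞` determined by `K` also the holes of `F ∪ K` leaves such a connected set, which
is again a neighbourhood of `∞` when those holes lie in a compact set. Conversely, if `W` is a
neighbourhood of `∞` avoiding `K` with `W \ F` connected, a hole of `F ∪ K` meeting `W` would be
relatively clopen in `W \ F` without containing `∞`.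
-/

open OnePoint

section Components

variable {X Y : Type*} [TopologicalSpace X] [TopologicalSpace Y]

theorem Topology.IsInducing.image_connectedComponentIn {f : X → Y} (hf : IsInducing f)
    {G : Set Y} (hG : G ⊆ range f) {x : X} (hx : f x ∈ G) :
    f '' connectedComponentIn (f ⁻¹' G) x = connectedComponentIn G (f x) := by
  refine subset_antisymm ?_ ?_
  · simpa only [image_preimage_eq_of_subset hG] using
      hf.continuous.continuousOn.image_connectedComponentIn_subset (s := f ⁻¹' G) hx
  · set C := connectedComponentIn G (f x)
    have hC : f '' (f ⁻¹' C) = C :=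
      image_preimage_eq_of_subset ((connectedComponentIn_subset _ _).trans hG)
    rw [← hC]
    refine image_mono ((hf.isPreconnected_image.1 ?_).subset_connectedComponentIn
      (mem_connectedComponentIn hx) (preimage_mono (connectedComponentIn_subset _ _)))
    rw [hC]
    exact isPreconnected_connectedComponentIn

theorem Subtype.exists_isCompact_image_val_subset_iff {s : Set Y} (A : Set s) :
    (∃ K, IsCompact K ∧ K ⊆ s ∧ Subtype.val '' A ⊆ K) ↔ ∃ K, IsCompact K ∧ A ⊆ K := by
  constructor
  · rintro ⟨K, hK, hKs, hAK⟩
    exact ⟨Subtype.val ⁻¹' K, IsInducing.subtypeVal.isCompact_preimage' hK (by simpa),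
      image_subset_iff.1 hAK⟩
  · rintro ⟨K, hK, hAK⟩
    exact ⟨_, hK.image continuous_subtype_val, Subtype.coe_image_subset s K, image_mono hAK⟩

theorem closure_connectedComponentIn_inter_subset (O : Set X) (x : X) :
    closure (connectedComponentIn O x) ∩ O ⊆ connectedComponentIn O x := by
  rintro y ⟨hyc, hyO⟩
  by_cases hx : x ∈ O
  · have hpre : IsPreconnected (insert y (connectedComponentIn O x)) :=
      isPreconnected_connectedComponentIn.subset_closure (subset_insert _ _)
        (insert_subset hyc subset_closure)
    exact hpre.subset_connectedComponentIn (mem_insert_of_mem _ (mem_connectedComponentIn hx))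
      (insert_subset hyO (connectedComponentIn_subset _ _)) (mem_insert _ _)
  · simp [connectedComponentIn_eq_empty hx] at hyc

theorem connectedComponentIn_sdiff_of_saturated {O H : Set X}
    (hH : ∀ y ∈ H, connectedComponentIn O y ⊆ H) {x : X} (hx : x ∈ O \ H) :
    connectedComponentIn (O \ H) x = connectedComponentIn O x := by
  refine (connectedComponentIn_mono x sdiff_subset).antisymm
    (isPreconnected_connectedComponentIn.subset_connectedComponentIn
      (mem_connectedComponentIn hx.1) fun y hy => ⟨connectedComponentIn_subset O x hy, ?_⟩)
  intro hyH
  refine hx.2 (hH y hyH ?_)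
  rw [← connectedComponentIn_eq hy]
  exact mem_connectedComponentIn hx.1

end Components

namespace OnePoint

variable {X : Type*} [TopologicalSpace X]

theorem infty_mem_closure_image_coe {s : Set X}
    (hs : ∀ K, IsClosed K → IsCompact K → ¬ s ⊆ K) :
    (∞ : OnePoint X) ∈ closure ((↑) '' s) := by
  rw [mem_closure_iff_nhds_basis hasBasis_nhds_infty]
  rintro K ⟨hKc, hKk⟩
  obtain ⟨x, hxs, hxK⟩ := not_subset.1 (hs K hKc hKk)
  exact ⟨x, mem_image_of_mem _ hxs, Or.inl (mem_image_of_mem _ hxK)⟩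

theorem isConnected_insert_infty_image_coe {G : Set X}
    (hG : ∀ x ∈ G, ∀ K, IsClosed K → IsCompact K → ¬ connectedComponentIn G x ⊆ K) :
    IsConnected (insert ∞ ((↑) '' G : Set (OnePoint X))) := by
  refine ⟨insert_nonempty _ _, isPreconnected_of_forall ∞ ?_⟩
  rintro _ (rfl | ⟨x, hx, rfl⟩)
  · exact ⟨{∞}, singleton_subset_iff.2 (mem_insert _ _), rfl, rfl, isPreconnected_singleton⟩
  refine ⟨insert ∞ ((↑) '' connectedComponentIn G x),
    insert_subset_insert (image_mono (connectedComponentIn_subset _ _)), mem_insert _ _,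
    mem_insert_of_mem _ (mem_image_of_mem _ (mem_connectedComponentIn hx)), ?_⟩
  have hC : IsPreconnected ((↑) '' connectedComponentIn G x : Set (OnePoint X)) :=
    isPreconnected_connectedComponentIn.image _ continuous_coe.continuousOn
  exact hC.subset_closure (subset_insert _ _)
    (insert_subset (infty_mem_closure_image_coe (hG x hx)) subset_closure)

end OnePoint

section Holes

variable {X : Type*} [TopologicalSpace X]

/-- The union of the holes of `E` in `X`, i.e. `holesUnion` for `Ω = X`. -/
def holeSet (E : Set X) : Set X :=
  {x | x ∈ Eᶜ ∧ ∃ K, IsCompact K ∧ connectedComponentIn Eᶜ x ⊆ K}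

theorem connectedComponentIn_subset_holeSet {E : Set X} {x : X} (hx : x ∈ holeSet E) :
    connectedComponentIn Eᶜ x ⊆ holeSet E := by
  obtain ⟨-, K, hK, hxK⟩ := hx
  intro y hy
  exact ⟨connectedComponentIn_subset _ _ hy, K, hK, connectedComponentIn_eq hy ▸ hxK⟩

theorem isConnected_compl_image_coe_of_holeSet_eq_empty {F : Set X} (hF : holeSet F = ∅) :
    IsConnected ((↑) '' F : Set (OnePoint X))ᶜ := by
  rw [compl_image_coe, union_singleton]
  refine isConnected_insert_infty_image_coe fun x hx K _ hK hxK => ?_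
  exact hF.subset ⟨hx, K, hK, hxK⟩

variable [T2Space X]

theorem exists_isCompact_holeSet_subset_of_locConnAt [LocallyConnectedSpace X] {F : Set X}
    (hF : IsClosed F) (hlc : LocConnAt ((↑) '' F : Set (OnePoint X))ᶜ ∞)
    {K : Set X} (hK : IsCompact K) : ∃ L, IsCompact L ∧ holeSet (F ∪ K) ⊆ L := by
  obtain ⟨W, hW, hWK, hWconn⟩ :=
    hlc _ ((isOpen_compl_image_coe.2 ⟨hK.isClosed, hK⟩).mem_nhds infty_notMem_image_coe)
  obtain ⟨s, ⟨-, hs⟩, hsW⟩ := hasBasis_nhds_infty.mem_iff.1 hW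
  refine ⟨s, hs, fun b ⟨hb, LB, hLB, hBLB⟩ => by_contra fun hbs => ?_⟩
  set B := connectedComponentIn (F ∪ K)ᶜ b
  have hBopen : IsOpen B := (hF.union hK.isClosed).isOpen_compl.connectedComponentIn
  -- `B` is open, and relatively closed in `(F ∪ K)ᶜ ⊇ W \ F`: it splits `W \ F` away from `∞`.
  have hcover : W ∩ ((↑) '' F)ᶜ ⊆ (↑) '' B ∪ ((↑) '' closure B)ᶜ := by
    rintro t ⟨htW, htF⟩
    induction t using OnePoint.rec with
    | infty => exact Or.inr infty_notMem_image_coe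
    | coe x =>
      by_cases hx : x ∈ closure B
      · refine Or.inl (mem_image_of_mem _
          (closure_connectedComponentIn_inter_subset _ _ ⟨hx, ?_⟩))
        rintro (hxF | hxK)
        · exact htF (mem_image_of_mem _ hxF)
        · exact hWK htW (mem_image_of_mem _ hxK)
      · exact Or.inr fun hx' => hx (coe_injective.mem_set_image.1 hx')
  have hbW : (b : OnePoint X) ∈ W ∩ ((↑) '' F)ᶜ :=
    ⟨hsW (Or.inl (mem_image_of_mem _ hbs)),
      fun hbF => hb (Or.inl (coe_injective.mem_set_image.1 hbF))⟩
  have hinfty : ∞ ∈ W ∩ ((↑) '' F)ᶜ := ⟨mem_of_mem_nhds hW, infty_notMem_image_coe⟩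
  obtain ⟨_, -, ⟨x, hxB, rfl⟩, hx⟩ := hWconn.isPreconnected _ _ (isOpen_image_coe.2 hBopen)
    (isOpen_compl_image_coe.2 ⟨isClosed_closure, hLB.closure_of_subset hBLB⟩) hcover
    ⟨b, hbW, mem_image_of_mem _ (mem_connectedComponentIn hb)⟩
    ⟨∞, hinfty, infty_notMem_image_coe⟩
  exact hx (mem_image_of_mem _ (subset_closure hxB))

theorem locConnAt_of_forall_exists_isCompact_holeSet_subset {F : Set X}
    (h : ∀ K, IsCompact K → ∃ L, IsCompact L ∧ holeSet (F ∪ K) ⊆ L) :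
    LocConnAt ((↑) '' F : Set (OnePoint X))ᶜ ∞ := by
  intro U hU
  obtain ⟨K, ⟨-, hK⟩, hKU⟩ := hasBasis_nhds_infty.mem_iff.1 hU
  obtain ⟨L, hL, hHL⟩ := h K hK
  set H := holeSet (F ∪ K)
  refine ⟨((↑) '' (K ∪ H))ᶜ, ?_, ?_, ?_⟩
  · have hKL : IsCompact (K ∪ L) := hK.union hL
    exact mem_of_superset
      ((isOpen_compl_image_coe.2 ⟨hKL.isClosed, hKL⟩).mem_nhds infty_notMem_image_coe)
      (compl_subset_compl.2 (image_mono (union_subset_union_right _ hHL)))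
  · exact (compl_subset_compl.2 (image_mono subset_union_left)).trans
      ((compl_image_coe K).trans_subset hKU)
  have hWF : ((↑) '' (K ∪ H))ᶜ ∩ ((↑) '' F)ᶜ =
      insert ∞ ((↑) '' ((F ∪ K)ᶜ \ H) : Set (OnePoint X)) := by
    rw [← compl_union, ← image_union, compl_image_coe, union_singleton]
    congr 3
    ext; simp only [mem_compl_iff, mem_union, Set.mem_sdiff]; tauto
  rw [hWF]
  refine isConnected_insert_infty_image_coe fun x hx K' _ hK' hxK' => hx.2 ⟨hx.1, K', hK', ?_⟩
  rwa [← connectedComponentIn_sdiff_of_saturated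
    (fun y hy => connectedComponentIn_subset_holeSet hy) hx]

theorem locConnAt_compl_image_coe_infty_iff [LocallyConnectedSpace X] {F : Set X}
    (hF : IsClosed F) :
    LocConnAt ((↑) '' F : Set (OnePoint X))ᶜ ∞ ↔
      ∀ K, IsCompact K → ∃ L, IsCompact L ∧ holeSet (F ∪ K) ⊆ L :=
  ⟨fun hlc _ hK => exists_isCompact_holeSet_subset_of_locConnAt hF hlc hK,
    locConnAt_of_forall_exists_isCompact_holeSet_subset⟩

end Holes

theorem connectedComponentIn_sdiff_eq_image_val {Ω E : Set ℂ} {y : Ω} (hy : (y : ℂ) ∉ E) :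
    connectedComponentIn (Ω \ E) y =
      Subtype.val '' connectedComponentIn (Subtype.val ⁻¹' E : Set Ω)ᶜ y := by
  have hE : (Subtype.val ⁻¹' E : Set Ω)ᶜ = Subtype.val ⁻¹' (Ω \ E) := by ext; simp
  rw [hE, IsInducing.subtypeVal.image_connectedComponentIn
    (by rw [Subtype.range_coe]; exact sdiff_subset) (show (y : ℂ) ∈ Ω \ E from ⟨y.2, hy⟩)]

theorem holesUnion_eq_image_val_holeSet (Ω E : Set ℂ) :
    holesUnion Ω E = Subtype.val '' holeSet (Subtype.val ⁻¹' E : Set Ω) := by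
  ext z
  constructor
  · rintro ⟨B, ⟨⟨x, ⟨hxΩ, hxE⟩, rfl⟩, K, hK, hKΩ, hBK⟩, hzB⟩
    rw [connectedComponentIn_sdiff_eq_image_val (y := ⟨x, hxΩ⟩) hxE] at hzB hBK
    have hx : (⟨x, hxΩ⟩ : Ω) ∈ holeSet (Subtype.val ⁻¹' E) :=
      ⟨hxE, (Subtype.exists_isCompact_image_val_subset_iff _).1 ⟨K, hK, hKΩ, hBK⟩⟩
    exact image_mono (connectedComponentIn_subset_holeSet hx) hzB
  · rintro ⟨y, ⟨hy, hK⟩, rfl⟩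
    obtain ⟨K, hK, hKΩ, hBK⟩ := (Subtype.exists_isCompact_image_val_subset_iff _).2 hK
    rw [← connectedComponentIn_sdiff_eq_image_val (E := E) hy] at hBK
    exact ⟨_, ⟨⟨y, ⟨y.2, hy⟩, rfl⟩, K, hK, hKΩ, hBK⟩, mem_connectedComponentIn ⟨y.2, hy⟩⟩

theorem forall_exists_holesUnion_subset_iff (Ω F : Set ℂ) :
    (∀ K : Set ℂ, IsCompact K → K ⊆ Ω →
      ∃ L : Set ℂ, IsCompact L ∧ L ⊆ Ω ∧ holesUnion Ω (F ∪ K) ⊆ L) ↔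
      ∀ K : Set Ω, IsCompact K → ∃ L, IsCompact L ∧ holeSet (Subtype.val ⁻¹' F ∪ K) ⊆ L := by
  constructor
  · intro h K hK
    obtain ⟨L, hL, hLΩ, hHL⟩ :=
      h _ (hK.image continuous_subtype_val) (Subtype.coe_image_subset _ _)
    rw [holesUnion_eq_image_val_holeSet, preimage_union,
      preimage_image_eq _ Subtype.val_injective] at hHL
    exact (Subtype.exists_isCompact_image_val_subset_iff _).1 ⟨L, hL, hLΩ, hHL⟩
  · intro h K hK hKΩ
    obtain ⟨L, hL, hHL⟩ :=
      h _ (IsInducing.subtypeVal.isCompact_preimage' hK (by rwa [Subtype.range_coe]))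
    rw [← preimage_union] at hHL
    rw [holesUnion_eq_image_val_holeSet]
    exact (Subtype.exists_isCompact_image_val_subset_iff _).2 ⟨L, hL, hHL⟩

theorem stmt2 (Ω F : Set ℂ) (hΩ : IsOpen Ω) (hF : RelClosed Ω F)
    (hnoholes : ∀ B : Set ℂ, ¬ IsHole Ω F B) :
    ArakelianIn Ω F ↔
      ∀ K : Set ℂ, IsCompact K → K ⊆ Ω →
        ∃ L : Set ℂ, IsCompact L ∧ L ⊆ Ω ∧ holesUnion Ω (F ∪ K) ⊆ L := by
  have : LocallyConnectedSpace Ω := hΩ.locallyConnectedSpace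
  have hF' : IsClosed (Subtype.val ⁻¹' F : Set Ω) := hF.2
  have hnoholes' : holeSet (Subtype.val ⁻¹' F : Set Ω) = ∅ := by
    rw [← image_eq_empty, ← holesUnion_eq_image_val_holeSet, holesUnion, sUnion_eq_empty]
    exact fun B hB => (hnoholes B hB).elim
  rw [forall_exists_holesUnion_subset_iff, ← locConnAt_compl_image_coe_infty_iff hF']
  exact ⟨fun h => h.2.2,
    fun h => ⟨hF, isConnected_compl_image_coe_of_holeSet_eq_empty hnoholes', h⟩⟩
end
end

section
/- Let Ω ⊆ ℂ be open and F ⊆ Ω relatively closed. Then F is Arakelian in Ω if and only if for every open set U with F ⊆ U ⊆ Ω there exists an open set V ⊆ Ω such that F ⊆ V ⊆ U and (Ω ∪ {α}) \ V is connected. -/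
/-!
Work in `X = OnePoint Ω`, where `S = ocCompl Ω F` is `X` with `F` removed and the right-hand
side says that every closed `C` with `∞ ∈ C ⊆ S` lies in a closed connected `D ⊆ S`. Call a
component of `Ω \ (F ∪ K)` that does not accumulate at `∞` a hole of `F ∪ K`. A preconnected
set through `∞` avoiding `F ∪ K` cannot meet a hole, since it would have to cross the hole's
frontier, which lies in `F ∪ K`. So connectedness of `S` says that `F` has no holes, and local
connectedness at `∞` says that the holes of `F ∪ K` lie in a compact set for every compact `K`.

Given this, pick a compact exhaustion `κ` with the holes of `F ∪ κ n` inside `κ (n + 1)`.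
A point outside `κ (n + 1)` lies in a component of `Ω \ (F ∪ κ n)` that reaches `∞`, and a chain
of compact connected links through components at deeper and deeper levels gives a closed
connected ray to `∞` inside it. Finitely many rays, thickened by compact connected sets, absorb
`C` between consecutive levels; the union over all levels is locally finite, hence closed, and
together with `∞` it is the required `D`.

Conversely, `C = {∞, p}` gives connectedness. If holes of `F ∪ K` were unbounded, put a sequence
of their points tending to `∞` into `C`. The connected `D` must leave each of these holes through
the compact set `frontier L` for a compact neighbourhood `L` of `K`, so all of them are among the
finitely many components of `Ω \ (F ∪ K)` meeting `D ∩ frontier L`: a bounded set.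
-/

open Topology Filter Set

noncomputable section

open scoped OnePoint

section Topology

variable {Y : Type*} [TopologicalSpace Y]

theorem closure_connectedComponentIn_inter_subset_s6 (G : Set Y) (y : Y) :
    closure (connectedComponentIn G y) ∩ G ⊆ connectedComponentIn G y := by
  rintro w ⟨hw, hwG⟩
  by_cases hy : y ∈ G
  · have hpre : IsPreconnected (insert w (connectedComponentIn G y)) :=
      isPreconnected_connectedComponentIn.subset_closure (subset_insert _ _)
        (insert_subset hw subset_closure)
    exact hpre.subset_connectedComponentIn
      (mem_insert_of_mem _ (mem_connectedComponentIn hy))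
      (insert_subset hwG (connectedComponentIn_subset _ _)) (mem_insert _ _)
  · rw [connectedComponentIn_eq_empty hy, closure_empty] at hw
    exact hw.elim

theorem IsCompact.finite_image_connectedComponentIn [LocallyConnectedSpace Y] {P G : Set Y}
    (hP : IsCompact P) (hG : IsOpen G) (hPG : P ⊆ G) : (connectedComponentIn G '' P).Finite := by
  obtain ⟨t, ht⟩ := hP.elim_finite_subcover (fun w : P => connectedComponentIn G w)
    (fun _ => hG.connectedComponentIn)
    fun w hw => mem_iUnion.2 ⟨⟨w, hw⟩, mem_connectedComponentIn (hPG hw)⟩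
  refine (t.finite_toSet.image fun w : P => connectedComponentIn G w).subset ?_
  rintro _ ⟨w, hw, rfl⟩
  obtain ⟨v, hvt, hwv⟩ := mem_iUnion₂.1 (ht hw)
  exact ⟨v, hvt, connectedComponentIn_eq hwv⟩

theorem exists_isCompact_isPreconnected_mem_nhds [T2Space Y] [LocallyCompactSpace Y]
    [LocallyConnectedSpace Y] {O : Set Y} {y : Y} (hO : O ∈ 𝓝 y) :
    ∃ B ∈ 𝓝 y, B ⊆ O ∧ IsCompact B ∧ IsPreconnected B := by
  obtain ⟨N, hN, hNO, hNc⟩ := local_compact_nhds hO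
  have hV : connectedComponentIn (interior N) y ∈ 𝓝 y :=
    isOpen_interior.connectedComponentIn.mem_nhds
      (mem_connectedComponentIn (mem_interior_iff_mem_nhds.2 hN))
  have hVN : connectedComponentIn (interior N) y ⊆ N :=
    (connectedComponentIn_subset _ _).trans interior_subset
  exact ⟨_, mem_of_superset hV subset_closure,
    (hNc.isClosed.closure_subset_iff.2 hVN).trans hNO, hNc.closure_of_subset hVN,
    isPreconnected_connectedComponentIn.closure⟩

theorem IsPreconnected.exists_isCompact_isPreconnected_superset [T2Space Y]
    [LocallyCompactSpace Y] [LocallyConnectedSpace Y] {O M : Set Y} (hOc : IsPreconnected O)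
    (hO : IsOpen O) (hM : IsCompact M) (hMO : M ⊆ O) {y : Y} (hy : y ∈ O) :
    ∃ K, IsCompact K ∧ IsPreconnected K ∧ y ∈ K ∧ M ⊆ K ∧ K ⊆ O := by
  have join : ∀ z ∈ O, ∃ K, IsCompact K ∧ IsPreconnected K ∧ y ∈ K ∧ z ∈ K ∧ K ⊆ O := by
    refine fun z hz => hOc.induction₂
      (fun a b => ∃ K, IsCompact K ∧ IsPreconnected K ∧ a ∈ K ∧ b ∈ K ∧ K ⊆ O) ?_ ?_ ?_ hy hz
    · intro a ha
      obtain ⟨B, hB, hBO, hBc, hBp⟩ :=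
        exists_isCompact_isPreconnected_mem_nhds (hO.mem_nhds ha)
      filter_upwards [nhdsWithin_le_nhds hB] with b hb
      exact ⟨B, hBc, hBp, mem_of_mem_nhds hB, hb, hBO⟩
    · rintro a b c - - - ⟨K₁, hK₁, hK₁p, ha₁, hb₁, hK₁O⟩ ⟨K₂, hK₂, hK₂p, hb₂, hc₂, hK₂O⟩
      exact ⟨K₁ ∪ K₂, hK₁.union hK₂, hK₁p.union b hb₁ hb₂ hK₂p, Or.inl ha₁, Or.inr hc₂,
        union_subset hK₁O hK₂O⟩
    · rintro a b - - ⟨K, hK, hKp, ha, hb, hKO⟩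
      exact ⟨K, hK, hKp, hb, ha, hKO⟩
  refine hM.induction_on
    (p := fun s => ∃ K, IsCompact K ∧ IsPreconnected K ∧ y ∈ K ∧ s ⊆ K ∧ K ⊆ O)
    ⟨{y}, isCompact_singleton, isPreconnected_singleton, rfl, empty_subset _,
      singleton_subset_iff.2 hy⟩ ?_ ?_ ?_
  · rintro s t hst ⟨K, hK, hKp, hyK, htK, hKO⟩
    exact ⟨K, hK, hKp, hyK, hst.trans htK, hKO⟩
  · rintro s t ⟨K₁, hK₁, hK₁p, hy₁, hs₁, hK₁O⟩ ⟨K₂, hK₂, hK₂p, hy₂, ht₂, hK₂O⟩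
    exact ⟨K₁ ∪ K₂, hK₁.union hK₂, hK₁p.union y hy₁ hy₂ hK₂p, Or.inl hy₁,
      union_subset_union hs₁ ht₂, union_subset hK₁O hK₂O⟩
  · intro x hx
    obtain ⟨B, hB, hBO, hBc, hBp⟩ :=
      exists_isCompact_isPreconnected_mem_nhds (hO.mem_nhds (hMO hx))
    obtain ⟨K, hK, hKp, hyK, hxK, hKO⟩ := join x (hMO hx)
    exact ⟨B, nhdsWithin_le_nhds hB, K ∪ B, hK.union hBc,
      hKp.union x hxK (mem_of_mem_nhds hB) hBp, Or.inl hyK, subset_union_right,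
      union_subset hKO hBO⟩

end Topology

namespace CompactExhaustion

variable {Y : Type*} [TopologicalSpace Y] (κ : CompactExhaustion Y)

theorem tendsto_coe_infty {x : ℕ → Y} (hx : ∀ n, x n ∉ κ n) :
    Tendsto (fun n => (x n : OnePoint Y)) atTop (𝓝 ∞) := by
  refine OnePoint.hasBasis_nhds_infty.tendsto_right_iff.2 fun K ⟨_, hK⟩ => ?_
  obtain ⟨m, hm⟩ := κ.exists_superset_of_isCompact hK
  filter_upwards [eventually_ge_atTop m] with n hn
  exact Or.inl (mem_image_of_mem _ fun hxK => hx n (κ.subset hn (hm hxK)))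

theorem locallyFinite_of_disjoint {f : ℕ → Set Y} (hf : ∀ n, Disjoint (f n) (κ n)) :
    LocallyFinite f := by
  intro y
  obtain ⟨m, hm⟩ := κ.exists_mem_nhds y
  refine ⟨κ m, hm, (finite_lt_nat (m + 1)).subset fun n ⟨z, hzf, hzκ⟩ => ?_⟩
  by_contra! hmn
  exact disjoint_left.1 (hf n) hzf (κ.subset (by simp at hmn; omega) hzκ)

theorem exists_mem_sdiff_interior (hκ1 : κ 1 = ∅) (y : Y) :
    ∃ n, y ∈ κ (n + 2) \ interior (κ (n + 1)) := by
  have h2 : 2 ≤ κ.find y := by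
    by_contra! h
    have := κ.mem_iff_find_le.2 (show κ.find y ≤ 1 by omega)
    rw [hκ1] at this
    exact this
  refine ⟨κ.find y - 2, κ.mem_iff_find_le.2 (by omega), fun hy => ?_⟩
  have := κ.mem_iff_find_le.1 (interior_subset hy)
  omega

end CompactExhaustion

namespace Arakelian

/-- The right-hand side of the theorem, read in `OnePoint Ω` through `C = ocCompl Ω U` and
`D = ocCompl Ω V`. -/
def HasConnectedClosedSupersets {X : Type*} [TopologicalSpace X] (S : Set X) (a : X) : Prop :=
  ∀ C, IsClosed C → a ∈ C → C ⊆ S → ∃ D, IsClosed D ∧ IsConnected D ∧ C ⊆ D ∧ D ⊆ S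

theorem isConnected_of_hasConnectedClosedSupersets {X : Type*} [TopologicalSpace X] [T1Space X]
    {S : Set X} {a : X} (ha : a ∈ S) (h : HasConnectedClosedSupersets S a) : IsConnected S := by
  refine ⟨⟨a, ha⟩, isPreconnected_of_forall a fun p hp => ?_⟩
  obtain ⟨D, -, hD, hCD, hDS⟩ :=
    h {a, p} (toFinite _).isClosed (mem_insert _ _) (insert_subset ha (singleton_subset_iff.2 hp))
  exact ⟨D, hDS, hCD (mem_insert _ _), hCD (mem_insert_of_mem _ rfl), hD.2⟩

section Escapes

variable {Y : Type*} [TopologicalSpace Y]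

/-- For `T2Space Y` this says that `s` lies in no compact subset of `Y`. -/
def Escapes (s : Set Y) : Prop := (∞ : OnePoint Y) ∈ closure (((↑) : Y → OnePoint Y) '' s)

theorem Escapes.mono {s t : Set Y} (h : Escapes s) (hst : s ⊆ t) : Escapes t :=
  closure_mono (image_mono hst) h

theorem Escapes.nonempty {s : Set Y} (h : Escapes s) : s.Nonempty := by
  by_contra hs
  rw [not_nonempty_iff_eq_empty.1 hs, Escapes, image_empty, closure_empty] at h
  exact h

theorem Escapes.exists_notMem [T2Space Y] {s K : Set Y} (h : Escapes s) (hK : IsCompact K) :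
    ∃ y ∈ s, y ∉ K := by
  have hKc : IsClosed ((↑) '' K : Set (OnePoint Y)) :=
    OnePoint.isClosed_image_coe.2 ⟨hK.isClosed, hK⟩
  obtain ⟨_, hpK, y, hy, rfl⟩ :=
    mem_closure_iff.1 h _ hKc.isOpen_compl OnePoint.infty_notMem_image_coe
  exact ⟨y, hy, fun hyK => hpK (mem_image_of_mem _ hyK)⟩

theorem escapes_of_tendsto {s : Set Y} {x : ℕ → Y} (hx : ∀ n, x n ∈ s)
    (h : Tendsto (fun n => (x n : OnePoint Y)) atTop (𝓝 ∞)) : Escapes s :=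
  mem_closure_of_tendsto h (Eventually.of_forall fun n => mem_image_of_mem _ (hx n))

theorem escapes_biUnion_iff {ι : Type*} {I : Set ι} (hI : I.Finite) {s : ι → Set Y} :
    Escapes (⋃ i ∈ I, s i) ↔ ∃ i ∈ I, Escapes (s i) := by
  simp only [Escapes, image_iUnion₂, hI.closure_biUnion, mem_iUnion₂, exists_prop]

theorem isPreconnected_insert_infty {s : Set Y} (hs : IsPreconnected s) (he : Escapes s) :
    IsPreconnected (insert ∞ ((↑) '' s : Set (OnePoint Y))) :=
  (hs.image _ OnePoint.continuous_coe.continuousOn).subset_closure (subset_insert _ _)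
    (insert_subset he subset_closure)

theorem isPreconnected_insert_infty_of_forall {s : Set Y}
    (h : ∀ y ∈ s, ∃ t ⊆ s, y ∈ t ∧ IsPreconnected t ∧ Escapes t) :
    IsPreconnected (insert ∞ ((↑) '' s : Set (OnePoint Y))) := by
  refine isPreconnected_of_forall ∞ ?_
  rintro _ (rfl | ⟨y, hy, rfl⟩)
  · exact ⟨{∞}, singleton_subset_iff.2 (mem_insert _ _), rfl, rfl, isPreconnected_singleton⟩
  · obtain ⟨t, hts, hyt, ht, hte⟩ := h y hy
    exact ⟨_, insert_subset_insert (image_mono hts), mem_insert _ _,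
      mem_insert_of_mem _ (mem_image_of_mem _ hyt), isPreconnected_insert_infty ht hte⟩

theorem exists_coe_mem_frontier {T : Set (OnePoint Y)} (hT : IsPreconnected T) (hinf : ∞ ∈ T)
    {O : Set Y} (hO : IsOpen O) (hOe : ¬Escapes O) {y : Y} (hy : y ∈ O)
    (hyT : (y : OnePoint Y) ∈ T) : ∃ w ∈ frontier O, (w : OnePoint Y) ∈ T := by
  by_contra! h
  have hcover : T ⊆ (↑) '' O ∪ (closure ((↑) '' O))ᶜ := by
    intro p hp
    by_cases hpO : p ∈ (↑) '' O
    · exact Or.inl hpO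
    refine Or.inr fun hpc => ?_
    induction p using OnePoint.rec with
    | infty => exact hOe hpc
    | coe w =>
      have hw : w ∈ closure O := by
        rw [OnePoint.isOpenEmbedding_coe.isEmbedding.closure_eq_preimage_closure_image]
        exact hpc
      exact h w (hO.frontier_eq ▸ ⟨hw, fun hwO => hpO (mem_image_of_mem _ hwO)⟩) hp
  have hTO := hT.subset_left_of_subset_union (OnePoint.isOpen_image_coe.2 hO)
    isClosed_closure.isOpen_compl (disjoint_compl_right.mono_right
      (compl_subset_compl.2 subset_closure)) hcover ⟨_, hyT, mem_image_of_mem _ hy⟩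
  exact OnePoint.infty_notMem_image_coe (hTO hinf)

/-- Every hole of `A ∪ K`, i.e. every component of `(A ∪ K)ᶜ` that does not escape, lies
in `K'`. -/
def HolesSubset (A K K' : Set Y) : Prop :=
  ∀ y ∉ A ∪ K ∪ K', Escapes (connectedComponentIn (A ∪ K)ᶜ y)

theorem HolesSubset.mono {A K K' K'' : Set Y} (h : HolesSubset A K K') (hK' : K' ⊆ K'') :
    HolesSubset A K K'' :=
  fun y hy => h y fun hy' => hy (union_subset_union_right _ hK' hy')

theorem locConnAt_of_holesSubset [T2Space Y] {A : Set Y}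
    (h : ∀ K, IsCompact K → ∃ K', IsCompact K' ∧ HolesSubset A K K') :
    LocConnAt ((↑) '' A : Set (OnePoint Y))ᶜ ∞ := by
  intro N hN
  obtain ⟨K, ⟨hKc, hK⟩, hKN⟩ := OnePoint.hasBasis_nhds_infty.mem_iff.1 hN
  have hKN' : (↑) '' Kᶜ ⊆ N := subset_union_left.trans hKN
  obtain ⟨K', hK', hholes⟩ := h K hK
  set s := {y | y ∉ A ∪ K ∧ Escapes (connectedComponentIn (A ∪ K)ᶜ y)}
  have hsS : insert ∞ ((↑) '' s) ⊆ ((↑) '' A : Set (OnePoint Y))ᶜ := by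
    rintro _ (rfl | ⟨y, hy, rfl⟩)
    · exact OnePoint.infty_notMem_image_coe
    · rintro ⟨z, hz, hzy⟩
      exact hy.1 (Or.inl (OnePoint.coe_injective hzy ▸ hz))
  refine ⟨insert ∞ ((↑) '' s) ∪ (↑) '' (A \ K), mem_of_superset
    (OnePoint.hasBasis_nhds_infty.mem_of_mem ⟨hKc.union hK'.isClosed, hK.union hK'⟩) ?_,
    union_subset (insert_subset (hKN (Or.inr rfl))
      ((image_mono fun y hy hyK => hy.1 (Or.inr hyK)).trans hKN'))
      ((image_mono fun y hy => hy.2).trans hKN'), ?_⟩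
  · rintro _ (⟨y, hy, rfl⟩ | rfl)
    · simp only [mem_compl_iff, mem_union, not_or] at hy
      by_cases hyA : y ∈ A
      · exact Or.inr (mem_image_of_mem _ ⟨hyA, hy.1⟩)
      · exact Or.inl (mem_insert_of_mem _
          (mem_image_of_mem _ ⟨by simp [hyA, hy.1], hholes y (by simp [hyA, hy])⟩))
    · exact Or.inl (mem_insert _ _)
  · rw [union_inter_distrib_right, inter_eq_left.2 hsS,
      (disjoint_compl_right.mono_left (image_mono sdiff_subset)).inter_eq, union_empty]
    refine ⟨⟨∞, mem_insert _ _⟩, isPreconnected_insert_infty_of_forall fun y hy => ?_⟩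
    refine ⟨connectedComponentIn (A ∪ K)ᶜ y, fun z hz => ⟨connectedComponentIn_subset _ _ hz, ?_⟩,
      mem_connectedComponentIn hy.1, isPreconnected_connectedComponentIn, hy.2⟩
    rw [← connectedComponentIn_eq hz]
    exact hy.2

end Escapes

section Holes

variable {Y : Type*} [TopologicalSpace Y] [LocallyConnectedSpace Y] {A : Set Y}

theorem escapes_connectedComponentIn {T : Set (OnePoint Y)} (hT : IsPreconnected T)
    (hinf : ∞ ∈ T) {E : Set Y} (hE : IsClosed E) (hTE : ∀ y ∈ E, (y : OnePoint Y) ∉ T)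
    {y : Y} (hyT : (y : OnePoint Y) ∈ T) : Escapes (connectedComponentIn Eᶜ y) := by
  have hyE : y ∈ Eᶜ := fun h => hTE y h hyT
  have hO : IsOpen (connectedComponentIn Eᶜ y) := hE.isOpen_compl.connectedComponentIn
  by_contra hesc
  obtain ⟨w, hw, hwT⟩ :=
    exists_coe_mem_frontier hT hinf hO hesc (mem_connectedComponentIn hyE) hyT
  rw [hO.frontier_eq] at hw
  exact hw.2 (closure_connectedComponentIn_inter_subset_s6 _ _ ⟨hw.1, fun h => hTE w h hwT⟩)

theorem holesSubset_of_isPreconnected {T : Set (OnePoint Y)} (hT : IsPreconnected T)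
    (hinf : ∞ ∈ T) {K K' : Set Y} (hAK : IsClosed (A ∪ K))
    (hTAK : ∀ y ∈ A ∪ K, (y : OnePoint Y) ∉ T) (hK' : ∀ y ∉ A ∪ K ∪ K', (y : OnePoint Y) ∈ T) :
    HolesSubset A K K' :=
  fun y hy => escapes_connectedComponentIn hT hinf hAK hTAK (hK' y hy)

theorem holesSubset_empty_of_isConnected (hA : IsClosed A)
    (h : IsConnected ((↑) '' A : Set (OnePoint Y))ᶜ) : HolesSubset A ∅ ∅ :=
  holesSubset_of_isPreconnected h.2 OnePoint.infty_notMem_image_coe (by simpa using hA)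
    (fun y hy hyS => hyS (mem_image_of_mem _ (by simpa using hy)))
    (fun y hy hyA => hy (by simpa using hyA))

theorem exists_holesSubset_of_locConnAt [T2Space Y] (hA : IsClosed A)
    (h : LocConnAt ((↑) '' A : Set (OnePoint Y))ᶜ ∞) {K : Set Y} (hK : IsCompact K) :
    ∃ K', IsCompact K' ∧ HolesSubset A K K' := by
  have hKc : IsClosed ((↑) '' K : Set (OnePoint Y)) :=
    OnePoint.isClosed_image_coe.2 ⟨hK.isClosed, hK⟩
  obtain ⟨W, hW, hWK, hWc⟩ :=
    h _ (hKc.isOpen_compl.mem_nhds OnePoint.infty_notMem_image_coe)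
  obtain ⟨K', ⟨-, hK'⟩, hK'W⟩ := OnePoint.hasBasis_nhds_infty.mem_iff.1 hW
  refine ⟨K', hK', holesSubset_of_isPreconnected hWc.2
    ⟨mem_of_mem_nhds hW, OnePoint.infty_notMem_image_coe⟩ (hA.union hK.isClosed) ?_ ?_⟩
  · rintro y (hy | hy) ⟨hyW, hyS⟩
    · exact hyS (mem_image_of_mem _ hy)
    · exact hWK hyW (mem_image_of_mem _ hy)
  · intro y hy
    simp only [mem_union, not_or] at hy
    refine ⟨hK'W (Or.inl (mem_image_of_mem _ hy.2)), ?_⟩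
    rintro ⟨z, hz, hzy⟩
    exact hy.1.1 (OnePoint.coe_injective hzy ▸ hz)

theorem exists_mem_frontier_of_not_escapes {D : Set (OnePoint Y)} (hD : IsPreconnected D)
    (hinf : ∞ ∈ D) (hDA : ∀ w ∈ A, (w : OnePoint Y) ∉ D) {K L : Set Y} (hAK : IsClosed (A ∪ K))
    (hL : IsClosed L) (hKL : K ⊆ interior L) {y : Y} (hy : y ∉ A ∪ K) (hyL : y ∉ L)
    (hyD : (y : OnePoint Y) ∈ D) (he : ¬Escapes (connectedComponentIn (A ∪ K)ᶜ y)) :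
    ∃ w ∈ connectedComponentIn (A ∪ K)ᶜ y, w ∈ frontier L ∧ (w : OnePoint Y) ∈ D := by
  set O := connectedComponentIn (A ∪ K)ᶜ y
  have hOL : IsOpen (O ∩ Lᶜ) := hAK.isOpen_compl.connectedComponentIn.inter hL.isOpen_compl
  obtain ⟨w, hw, hwD⟩ := exists_coe_mem_frontier hD hinf hOL
    (fun h => he (h.mono inter_subset_left)) ⟨mem_connectedComponentIn hy, hyL⟩ hyD
  rw [hOL.frontier_eq] at hw
  have hwi : w ∉ interior L := by
    have := closure_mono inter_subset_right hw.1
    rwa [closure_compl] at this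
  have hwO : w ∈ O := closure_connectedComponentIn_inter_subset_s6 _ _
    ⟨closure_mono inter_subset_left hw.1, by rintro (h | h); exacts [hDA w h hwD, hwi (hKL h)]⟩
  have hwL : w ∈ L := by_contra fun h => hw.2 ⟨hwO, h⟩
  exact ⟨w, hwO, ⟨subset_closure hwL, hwi⟩, hwD⟩

end Holes

section Exhaustion

variable {Y : Type*} [TopologicalSpace Y] [WeaklyLocallyCompactSpace Y] [SigmaCompactSpace Y]
  {A : Set Y}

theorem exists_compactExhaustion_holesSubset
    (h : ∀ K, IsCompact K → ∃ K', IsCompact K' ∧ HolesSubset A K K') :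
    ∃ κ : CompactExhaustion Y, ∀ n, HolesSubset A (κ n) (interior (κ (n + 1))) := by
  let E := CompactExhaustion.choice Y
  have : ∀ m, ∃ k, HolesSubset A (E m) (E k) := fun m => by
    obtain ⟨K', hK', hh⟩ := h _ (E.isCompact m)
    obtain ⟨k, hk⟩ := E.exists_superset_of_isCompact hK'
    exact ⟨k, hh.mono hk⟩
  choose k hk using this
  let idx : ℕ → ℕ := fun n => Nat.rec 0 (fun _ i => k i + i + 1) n
  have hlt : ∀ n, idx n < idx (n + 1) := fun n => by
    show idx n < k (idx n) + idx n + 1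
    omega
  refine ⟨⟨fun n => E (idx n), fun n => E.isCompact _, fun n => E.subset_interior (hlt n),
    iUnion_eq_univ_iff.2 fun y => ?_⟩, fun n => (hk (idx n)).mono (E.subset_interior ?_)⟩
  · obtain ⟨m, hm⟩ := E.exists_mem y
    exact ⟨m, E.subset (strictMono_nat_of_lt_succ hlt).le_apply hm⟩
  · show k (idx n) < k (idx n) + idx n + 1
    omega

/-- Two empty sets in front of the exhaustion make level `0` the condition that `A` has no
holes at all. -/
theorem exists_compactExhaustion_holesSubset_of_empty (h₀ : HolesSubset A ∅ ∅)
    (h : ∀ K, IsCompact K → ∃ K', IsCompact K' ∧ HolesSubset A K K') :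
    ∃ κ : CompactExhaustion Y, κ 1 = ∅ ∧ ∀ n, HolesSubset A (κ n) (interior (κ (n + 1))) := by
  obtain ⟨μ, hμ⟩ := exists_compactExhaustion_holesSubset h
  refine ⟨μ.shiftr.shiftr, rfl, ?_⟩
  rintro (_ | _ | n)
  · show HolesSubset A ∅ (interior ∅)
    rwa [interior_empty]
  · exact h₀.mono (empty_subset _)
  · exact hμ n

theorem exists_seq_tendsto_infty_of_not_holesSubset {K L : Set Y}
    (h : ∀ K', IsCompact K' → ¬HolesSubset A K K') (hL : IsCompact L) :
    ∃ y : ℕ → Y, Tendsto (fun n => (y n : OnePoint Y)) atTop (𝓝 ∞) ∧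
      ∀ n, y n ∈ (A ∪ K)ᶜ ∧ y n ∉ L ∧ ¬Escapes (connectedComponentIn (A ∪ K)ᶜ (y n)) := by
  let E := CompactExhaustion.choice Y
  have : ∀ n, ∃ y ∉ A ∪ K ∪ (L ∪ E n), ¬Escapes (connectedComponentIn (A ∪ K)ᶜ y) :=
    fun n => by
      have := h _ (hL.union (E.isCompact n))
      unfold HolesSubset at this
      push Not at this
      exact this
  choose y hy hye using this
  simp only [mem_union, not_or] at hy
  exact ⟨y, E.tendsto_coe_infty fun n => (hy n).2.2,
    fun n => ⟨fun h => h.elim (hy n).1.1 (hy n).1.2, (hy n).2.1, hye n⟩⟩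

end Exhaustion

section LocallyCompact

variable {Y : Type*} [TopologicalSpace Y] [T2Space Y] {A : Set Y}

theorem exists_mem_connectedComponentIn_escapes (κ : CompactExhaustion Y)
    (hκ : ∀ n, HolesSubset A (κ n) (interior (κ (n + 1)))) {m : ℕ} {z : Y}
    (he : Escapes (connectedComponentIn (A ∪ κ m)ᶜ z)) :
    ∃ z' ∈ connectedComponentIn (A ∪ κ m)ᶜ z, z' ∉ κ (m + 2) ∧
      Escapes (connectedComponentIn (A ∪ κ (m + 1))ᶜ z') := by
  obtain ⟨z', hz', hz'κ⟩ := he.exists_notMem (κ.isCompact (m + 2))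
  refine ⟨z', hz', hz'κ, hκ (m + 1) z' ?_⟩
  have hz'A : z' ∉ A := fun h => connectedComponentIn_subset _ _ hz' (Or.inl h)
  simp only [mem_union, not_or]
  exact ⟨⟨hz'A, fun h => hz'κ (κ.subset_succ _ h)⟩, fun h => hz'κ (interior_subset h)⟩

theorem exists_seq_escapes (κ : CompactExhaustion Y)
    (hκ : ∀ n, HolesSubset A (κ n) (interior (κ (n + 1)))) {n : ℕ} {y : Y}
    (he : Escapes (connectedComponentIn (A ∪ κ n)ᶜ y)) :
    ∃ x : ℕ → Y, x 0 = y ∧ ∀ j, Escapes (connectedComponentIn (A ∪ κ (n + j))ᶜ (x j)) ∧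
      x (j + 1) ∈ connectedComponentIn (A ∪ κ (n + j))ᶜ (x j) ∧ x (j + 1) ∉ κ (n + j + 2) := by
  have step : ∀ m z, ∃ z', Escapes (connectedComponentIn (A ∪ κ m)ᶜ z) →
      z' ∈ connectedComponentIn (A ∪ κ m)ᶜ z ∧ z' ∉ κ (m + 2) ∧
        Escapes (connectedComponentIn (A ∪ κ (m + 1))ᶜ z') := fun m z => by
    by_cases h : Escapes (connectedComponentIn (A ∪ κ m)ᶜ z)
    · obtain ⟨z', h'⟩ := exists_mem_connectedComponentIn_escapes κ hκ h
      exact ⟨z', fun _ => h'⟩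
    · exact ⟨z, fun h' => (h h').elim⟩
  choose f hf using step
  let x : ℕ → Y := fun j => Nat.rec y (fun j z => f (n + j) z) j
  have hx : ∀ j, Escapes (connectedComponentIn (A ∪ κ (n + j))ᶜ (x j)) := by
    intro j
    induction j with
    | zero => exact he
    | succ j ih => exact (hf _ _ ih).2.2
  exact ⟨x, rfl, fun j => ⟨hx j, (hf _ _ (hx j)).1, (hf _ _ (hx j)).2.1⟩⟩

variable [LocallyCompactSpace Y] [LocallyConnectedSpace Y]

theorem exists_ray (hA : IsClosed A) (κ : CompactExhaustion Y)
    (hκ : ∀ n, HolesSubset A (κ n) (interior (κ (n + 1)))) {n : ℕ} {y : Y}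
    (he : Escapes (connectedComponentIn (A ∪ κ n)ᶜ y)) :
    ∃ R, y ∈ R ∧ R ⊆ connectedComponentIn (A ∪ κ n)ᶜ y ∧ IsClosed R ∧ IsPreconnected R ∧
      Escapes R := by
  obtain ⟨x, rfl, hx⟩ := exists_seq_escapes κ hκ he
  set O := fun j => connectedComponentIn (A ∪ κ (n + j))ᶜ (x j)
  have hOsub : ∀ j, O j ⊆ O 0 := by
    intro j
    induction j with
    | zero => exact subset_rfl
    | succ j ih =>
      calc O (j + 1) ⊆ connectedComponentIn (A ∪ κ (n + j))ᶜ (x (j + 1)) :=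
            connectedComponentIn_mono _
              (compl_subset_compl.2 (union_subset_union_right _ (κ.subset_succ _)))
        _ = O j := (connectedComponentIn_eq (hx j).2.1).symm
        _ ⊆ O 0 := ih
  have link : ∀ j, ∃ L, IsCompact L ∧ IsPreconnected L ∧ x j ∈ L ∧ {x (j + 1)} ⊆ L ∧ L ⊆ O j :=
    fun j => isPreconnected_connectedComponentIn.exists_isCompact_isPreconnected_superset
      (hA.union (κ.isCompact _).isClosed).isOpen_compl.connectedComponentIn isCompact_singleton
      (singleton_subset_iff.2 (hx j).2.1)
      (mem_connectedComponentIn (connectedComponentIn_nonempty_iff.1 (hx j).1.nonempty))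
  choose L hLc hLp hxL hxL' hLO using link
  have hLκ : ∀ j, Disjoint (L j) (κ j) := fun j => disjoint_left.2 fun z hz hzκ =>
    connectedComponentIn_subset _ _ (hLO j hz) (Or.inr (κ.subset (by omega) hzκ))
  refine ⟨⋃ j, L j, mem_iUnion_of_mem 0 (hxL 0), iUnion_subset fun j => (hLO j).trans (hOsub j),
    (κ.locallyFinite_of_disjoint hLκ).isClosed_iUnion fun j => (hLc j).isClosed,
    IsPreconnected.iUnion_of_chain hLp fun j => ⟨x (j + 1), hxL' j rfl, hxL (j + 1)⟩, ?_⟩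
  exact escapes_of_tendsto (fun j => mem_iUnion_of_mem j (hxL' j rfl))
    (κ.tendsto_coe_infty fun j h => (hx j).2.2 (κ.subset (by omega) h))

theorem exists_isClosed_superset (hA : IsClosed A) (κ : CompactExhaustion Y)
    (hκ : ∀ n, HolesSubset A (κ n) (interior (κ (n + 1)))) {n : ℕ} {Q : Set Y}
    (hQ : IsCompact Q) (hQe : ∀ z ∈ Q, Escapes (connectedComponentIn (A ∪ κ n)ᶜ z)) :
    ∃ W, Q ⊆ W ∧ W ⊆ (A ∪ κ n)ᶜ ∧ IsClosed W ∧
      IsPreconnected (insert ∞ ((↑) '' W : Set (OnePoint Y))) := by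
  set G := (A ∪ κ n)ᶜ
  have hG : IsOpen G := (hA.union (κ.isCompact n).isClosed).isOpen_compl
  have hQG : Q ⊆ G := fun z hz => connectedComponentIn_nonempty_iff.1 (hQe z hz).nonempty
  have piece : ∀ z ∈ Q, ∃ P, Q ∩ connectedComponentIn G z ⊆ P ∧ P ⊆ G ∧ IsClosed P ∧
      IsPreconnected P ∧ Escapes P := by
    intro z hz
    obtain ⟨R, hzR, hRO, hRc, hRp, hRe⟩ := exists_ray hA κ hκ (hQe z hz)
    have hQO : IsCompact (Q ∩ connectedComponentIn G z) := by
      convert hQ.inter_right (isClosed_closure (s := connectedComponentIn G z)) using 1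
      exact subset_antisymm (inter_subset_inter_right _ subset_closure) fun w ⟨hwQ, hw⟩ =>
        ⟨hwQ, closure_connectedComponentIn_inter_subset_s6 _ _ ⟨hw, hQG hwQ⟩⟩
    obtain ⟨K, hK, hKp, hzK, hQK, hKO⟩ :=
      isPreconnected_connectedComponentIn.exists_isCompact_isPreconnected_superset
        hG.connectedComponentIn hQO inter_subset_right (mem_connectedComponentIn (hQG hz))
    exact ⟨R ∪ K, subset_union_of_subset_right hQK _,
      union_subset (hRO.trans (connectedComponentIn_subset _ _))
        (hKO.trans (connectedComponentIn_subset _ _)),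
      hRc.union hK.isClosed, hRp.union z hzR hzK hKp, hRe.mono subset_union_left⟩
  choose P hQP hPG hPc hPp hPe using piece
  obtain ⟨t, ht⟩ := hQ.elim_finite_subcover (fun z : Q => connectedComponentIn G z)
    (fun z => hG.connectedComponentIn)
    fun z hz => mem_iUnion.2 ⟨⟨z, hz⟩, mem_connectedComponentIn (hQG hz)⟩
  refine ⟨⋃ z ∈ t, P z z.2, fun w hw => ?_, iUnion₂_subset fun z _ => hPG z z.2,
    isClosed_biUnion_finset fun z _ => hPc z z.2,
    isPreconnected_insert_infty_of_forall fun w hw => ?_⟩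
  · obtain ⟨z, hzt, hwz⟩ := mem_iUnion₂.1 (ht hw)
    exact mem_iUnion₂.2 ⟨z, hzt, hQP z z.2 ⟨hw, hwz⟩⟩
  · obtain ⟨z, hzt, hwz⟩ := mem_iUnion₂.1 hw
    exact ⟨P z z.2, subset_iUnion₂_of_subset z hzt subset_rfl, hwz, hPp z z.2, hPe z z.2⟩

theorem hasConnectedClosedSupersets_of_holesSubset (hA : IsClosed A) (κ : CompactExhaustion Y)
    (hκ1 : κ 1 = ∅) (hκ : ∀ n, HolesSubset A (κ n) (interior (κ (n + 1)))) :
    HasConnectedClosedSupersets ((↑) '' A : Set (OnePoint Y))ᶜ ∞ := by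
  intro C hC hinf hCS
  have level : ∀ n, ∃ W, (↑) ⁻¹' C ∩ (κ (n + 2) \ interior (κ (n + 1))) ⊆ W ∧
      W ⊆ (A ∪ κ n)ᶜ ∧ IsClosed W ∧ IsPreconnected (insert ∞ ((↑) '' W : Set (OnePoint Y))) := by
    intro n
    refine exists_isClosed_superset hA κ hκ (((κ.isCompact _).diff isOpen_interior).inter_left
      (hC.preimage OnePoint.continuous_coe)) fun z ⟨hzC, _, hzi⟩ => hκ n z ?_
    have hzA : z ∉ A := fun h => hCS hzC (mem_image_of_mem _ h)
    simp only [mem_union, not_or]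
    exact ⟨⟨hzA, fun h => hzi (κ.subset_interior_succ n h)⟩, hzi⟩
  choose W hCW hWG hWc hWp using level
  have hpre : (↑) ⁻¹' insert ∞ ((↑) '' ⋃ n, W n : Set (OnePoint Y)) = ⋃ n, W n := by
    ext y
    simp [OnePoint.coe_ne_infty]
  refine ⟨insert ∞ ((↑) '' ⋃ n, W n), ?_, ⟨⟨∞, mem_insert _ _⟩, ?_⟩, ?_, ?_⟩
  · rw [OnePoint.isClosed_iff_of_mem (mem_insert _ _), hpre]
    exact (κ.locallyFinite_of_disjoint fun n => disjoint_left.2 fun y hy hyκ =>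
      hWG n hy (Or.inr hyκ)).isClosed_iUnion hWc
  · refine isPreconnected_of_forall ∞ ?_
    rintro _ (rfl | ⟨y, hy, rfl⟩)
    · exact ⟨{∞}, singleton_subset_iff.2 (mem_insert _ _), rfl, rfl, isPreconnected_singleton⟩
    · obtain ⟨n, hn⟩ := mem_iUnion.1 hy
      exact ⟨_, insert_subset_insert (image_mono (subset_iUnion _ n)), mem_insert _ _,
        mem_insert_of_mem _ (mem_image_of_mem _ hn), hWp n⟩
  · intro p hp
    induction p using OnePoint.rec with
    | infty => exact mem_insert _ _
    | coe y =>
      obtain ⟨n, hn⟩ := κ.exists_mem_sdiff_interior hκ1 y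
      exact mem_insert_of_mem _ (mem_image_of_mem _ (mem_iUnion.2 ⟨n, hCW n ⟨hp, hn⟩⟩))
  · rintro _ (rfl | ⟨y, hy, rfl⟩)
    · exact OnePoint.infty_notMem_image_coe
    · rintro ⟨z, hz, hzy⟩
      obtain ⟨n, hn⟩ := mem_iUnion.1 hy
      exact hWG n hn (Or.inl (OnePoint.coe_injective hzy ▸ hz))

theorem exists_holesSubset_of_hasConnectedClosedSupersets [SigmaCompactSpace Y]
    (hA : IsClosed A) (h : HasConnectedClosedSupersets ((↑) '' A : Set (OnePoint Y))ᶜ ∞)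
    {K : Set Y} (hK : IsCompact K) : ∃ K', IsCompact K' ∧ HolesSubset A K K' := by
  obtain ⟨L, hL, hKL⟩ := exists_compact_superset hK
  by_contra! hno
  obtain ⟨y, hlim, hy⟩ := exists_seq_tendsto_infty_of_not_holesSubset hno hL
  obtain ⟨D, hDc, hD, hCD, hDS⟩ := h _ hlim.isCompact_insert_range.isClosed (mem_insert _ _)
    (insert_subset OnePoint.infty_notMem_image_coe (range_subset_iff.2 fun n ⟨z, hz, hzy⟩ =>
      (hy n).1 (Or.inl (OnePoint.coe_injective hzy ▸ hz))))
  have hDA : ∀ w ∈ A, (w : OnePoint Y) ∉ D := fun w hw hwD => hDS hwD (mem_image_of_mem _ hw)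
  set G := (A ∪ K)ᶜ
  set P := (↑) ⁻¹' D ∩ frontier L
  have hPc : IsCompact P := hL.of_isClosed_subset
    ((hDc.preimage OnePoint.continuous_coe).inter isClosed_frontier)
    (inter_subset_right.trans (frontier_subset_closure.trans hL.isClosed.closure_subset))
  have hPG : P ⊆ G := fun w ⟨hwD, hwL⟩ => by
    rintro (h | h)
    exacts [hDA w h hwD, hwL.2 (hKL h)]
  have hyP : range y ⊆ ⋃ O ∈ connectedComponentIn G '' P, O ∩ range y := by
    rintro _ ⟨n, rfl⟩
    obtain ⟨hyG, hyL, hye⟩ := hy n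
    obtain ⟨w, hwO, hwL, hwD⟩ := exists_mem_frontier_of_not_escapes hD.2 (hCD (mem_insert _ _))
      hDA (hA.union hK.isClosed) hL.isClosed hKL hyG hyL (hCD (mem_insert_of_mem _ ⟨n, rfl⟩)) hye
    refine mem_iUnion₂.2 ⟨_, mem_image_of_mem _ ⟨hwD, hwL⟩, ?_, n, rfl⟩
    rw [← connectedComponentIn_eq hwO]
    exact mem_connectedComponentIn hyG
  obtain ⟨O, ⟨w, -, rfl⟩, hO⟩ := (escapes_biUnion_iff (hPc.finite_image_connectedComponentIn
    (hA.union hK.isClosed).isOpen_compl hPG)).1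
    ((escapes_of_tendsto (fun n => mem_range_self n) hlim).mono hyP)
  obtain ⟨_, hyO, n, rfl⟩ := hO.nonempty
  exact (hy n).2.2 (connectedComponentIn_eq hyO ▸ hO.mono inter_subset_left)

theorem isConnected_and_locConnAt_iff [SigmaCompactSpace Y] (hA : IsClosed A) :
    IsConnected ((↑) '' A : Set (OnePoint Y))ᶜ ∧ LocConnAt ((↑) '' A : Set (OnePoint Y))ᶜ ∞ ↔
      HasConnectedClosedSupersets ((↑) '' A : Set (OnePoint Y))ᶜ ∞ := by
  constructor
  · rintro ⟨hc, hlc⟩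
    obtain ⟨κ, hκ1, hκ⟩ := exists_compactExhaustion_holesSubset_of_empty
      (holesSubset_empty_of_isConnected hA hc) fun _ hK => exists_holesSubset_of_locConnAt hA hlc hK
    exact hasConnectedClosedSupersets_of_holesSubset hA κ hκ1 hκ
  · intro h
    exact ⟨isConnected_of_hasConnectedClosedSupersets OnePoint.infty_notMem_image_coe h,
      locConnAt_of_holesSubset fun _ hK => exists_holesSubset_of_hasConnectedClosedSupersets hA h hK⟩

end LocallyCompact

section Complex

variable {Ω : Set ℂ}

theorem isClosed_ocCompl {U : Set ℂ} (hU : IsOpen U) : IsClosed (ocCompl Ω U) :=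
  (OnePoint.isOpen_image_coe.2 (hU.preimage continuous_subtype_val)).isClosed_compl

theorem ocCompl_anti {U V : Set ℂ} (h : V ⊆ U) : ocCompl Ω U ⊆ ocCompl Ω V :=
  compl_subset_compl.2 (image_mono fun _ hx => h hx)

theorem ocCompl_image_val_compl_preimage {D : Set (OnePoint Ω)} (hD : ∞ ∈ D) :
    ocCompl Ω (Subtype.val '' (OnePoint.some ⁻¹' D)ᶜ) = D := by
  ext p
  induction p using OnePoint.rec with
  | infty => simp [ocCompl, hD]
  | coe y => simp [ocCompl]

theorem isOpen_image_val_compl_preimage (hΩ : IsOpen Ω) {D : Set (OnePoint Ω)}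
    (hD : IsClosed D) : IsOpen (Subtype.val '' (OnePoint.some ⁻¹' D)ᶜ) :=
  hΩ.isOpenMap_subtype_val _ (hD.preimage OnePoint.continuous_coe).isOpen_compl

theorem subset_image_val_compl_preimage {F : Set ℂ} (hF : F ⊆ Ω) {D : Set (OnePoint Ω)}
    (hD : D ⊆ ocCompl Ω F) : F ⊆ Subtype.val '' (OnePoint.some ⁻¹' D)ᶜ :=
  fun z hz => ⟨⟨z, hF hz⟩, fun h => hD h (mem_image_of_mem _ hz), rfl⟩

theorem forall_isOpen_iff_hasConnectedClosedSupersets (hΩ : IsOpen Ω) {F : Set ℂ} (hF : F ⊆ Ω) :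
    (∀ U : Set ℂ, IsOpen U → F ⊆ U → U ⊆ Ω →
        ∃ V : Set ℂ, IsOpen V ∧ V ⊆ Ω ∧ F ⊆ V ∧ V ⊆ U ∧ IsConnected (ocCompl Ω V)) ↔
      HasConnectedClosedSupersets (ocCompl Ω F) ∞ := by
  constructor
  · intro h C hC hinf hCS
    obtain ⟨V, hV, -, hFV, hVU, hVc⟩ := h _ (isOpen_image_val_compl_preimage hΩ hC)
      (subset_image_val_compl_preimage hF hCS) (Subtype.coe_image_subset _ _)
    exact ⟨ocCompl Ω V, isClosed_ocCompl hV, hVc,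
      (ocCompl_image_val_compl_preimage hinf).symm.subset.trans (ocCompl_anti hVU),
      ocCompl_anti hFV⟩
  · intro h U hU hFU hUΩ
    obtain ⟨D, hDc, hD, hCD, hDS⟩ := h _ (isClosed_ocCompl hU)
      OnePoint.infty_notMem_image_coe (ocCompl_anti hFU)
    refine ⟨_, isOpen_image_val_compl_preimage hΩ hDc, Subtype.coe_image_subset _ _,
      subset_image_val_compl_preimage hF hDS, ?_, ?_⟩
    · rintro _ ⟨y, hy, rfl⟩
      by_contra hyU
      exact hy (hCD fun ⟨x, hx, hxy⟩ => hyU (OnePoint.coe_injective hxy ▸ hx))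
    · rwa [ocCompl_image_val_compl_preimage (hCD OnePoint.infty_notMem_image_coe)]

end Complex

end Arakelian

theorem stmt6 (Ω F : Set ℂ) (hΩ : IsOpen Ω) (hF : RelClosed Ω F) :
    ArakelianIn Ω F ↔
      ∀ U : Set ℂ, IsOpen U → F ⊆ U → U ⊆ Ω →
        ∃ V : Set ℂ, IsOpen V ∧ V ⊆ Ω ∧ F ⊆ V ∧ V ⊆ U ∧
          IsConnected (ocCompl Ω V) := by
  have := hΩ.locallyCompactSpace
  have := hΩ.locallyConnectedSpace
  exact (and_iff_right hF).trans ((Arakelian.isConnected_and_locConnAt_iff hF.2).trans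
    (Arakelian.forall_isOpen_iff_hasConnectedClosedSupersets hΩ hF.1).symm)
end
end

section
/- If Ω ⊆ ℂ is a simply connected open set and G ⊆ Ω has connected complement (Ω ∪ {α}) \ G in the one point compactification of Ω, then (ℂ ∪ {∞}) \ G is connected. -/
open Topology Filter Set

noncomputable section

/-!
The map `Ĉ → Ω ∪ {α}` that is the identity on `Ω` and collapses `Ĉ \ Ω` to `α` is continuous,
hence closed (`Ĉ` is compact and `Ω ∪ {α}` is Hausdorff). Its fibres are points and the connected
set `Ĉ \ Ω`, and the preimage of `(Ω ∪ {α}) \ G` is `Ĉ \ G`. A closed map with connected fibres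
pulls connected sets back to connected sets.
-/

theorem IsConnected.preimage_of_isClosedMap_of_isConnected_fiber {α β : Type*}
    [TopologicalSpace α] [TopologicalSpace β] {f : α → β} (hf : IsClosedMap f) {s : Set β}
    (hs : IsConnected s) (hfib : ∀ y ∈ s, IsConnected (f ⁻¹' {y})) :
    IsConnected (f ⁻¹' s) := by
  obtain ⟨y, hy⟩ := hs.nonempty
  refine ⟨(hfib y hy).nonempty.mono (preimage_mono (singleton_subset_iff.2 hy)), ?_⟩
  refine isPreconnected_closed_iff.2 fun u v hu hv hsuv ⟨a, has, hau⟩ ⟨b, hbs, hbv⟩ => ?_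
  have hcover : s ⊆ f '' u ∪ f '' v := fun y hy => by
    obtain ⟨x, rfl⟩ := (hfib y hy).nonempty
    exact (hsuv hy).imp (mem_image_of_mem f) (mem_image_of_mem f)
  obtain ⟨y, hys, ⟨c, hcu, rfl⟩, ⟨d, hdv, hdc⟩⟩ := isPreconnected_closed_iff.1 hs.isPreconnected
    _ _ (hf u hu) (hf v hv) hcover ⟨f a, has, mem_image_of_mem f hau⟩
    ⟨f b, hbs, mem_image_of_mem f hbv⟩
  have hfiber_sub : f ⁻¹' {f c} ⊆ f ⁻¹' s := preimage_mono (singleton_subset_iff.2 hys)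
  obtain ⟨x, hx, hxuv⟩ := isPreconnected_closed_iff.1 (hfib _ hys).isPreconnected u v hu hv
    (hfiber_sub.trans hsuv) ⟨c, rfl, hcu⟩ ⟨d, hdc, hdv⟩
  exact ⟨x, hfiber_sub hx, hxuv⟩

namespace OnePoint

variable {X : Type*} {U : Set X}

open scoped Classical in
def collapse (U : Set X) (p : OnePoint X) : OnePoint U :=
  p.elim ∞ fun x => if h : x ∈ U then some ⟨x, h⟩ else ∞

lemma collapse_preimage_image_coe (W : Set U) :
    collapse U ⁻¹' (some '' W) = some '' ((↑) '' W : Set X) := by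
  ext p
  induction p with
  | infty => simp [collapse]
  | coe x =>
    by_cases hx : x ∈ U <;> simp [collapse, hx]

lemma collapse_preimage_infty : collapse U ⁻¹' {∞} = (some '' U)ᶜ := by
  rw [← compl_range_coe, preimage_compl, ← image_univ, collapse_preimage_image_coe,
    image_univ, Subtype.range_coe]

lemma collapse_preimage_coe (x : U) :
    collapse U ⁻¹' {some x} = {some (x : X)} := by
  rw [← image_singleton, collapse_preimage_image_coe, image_singleton, image_singleton]

variable [TopologicalSpace X]

lemma continuous_collapse [T2Space X] (hU : IsOpen U) : Continuous (collapse U) := by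
  refine continuous_def.2 fun s hs => ?_
  by_cases h : ∞ ∈ s
  · have hs' : s = (some '' (some ⁻¹' s)ᶜ)ᶜ := by
      rw [compl_image_coe, compl_compl, image_preimage_eq_inter_range, ← compl_infty, ← sdiff_eq,
        union_singleton, insert_sdiff_singleton, insert_eq_of_mem h]
    have hK : IsCompact (some ⁻¹' s : Set U)ᶜ := ((isOpen_iff_of_mem' h).1 hs).1
    rw [hs', preimage_compl, collapse_preimage_image_coe, isOpen_compl_image_coe]
    exact ⟨(hK.image continuous_subtype_val).isClosed, hK.image continuous_subtype_val⟩
  · have hs' : s = some '' (some ⁻¹' s : Set U) := by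
      rw [image_preimage_eq_of_subset]
      rwa [← compl_infty, subset_compl_singleton_iff]
    rw [hs', collapse_preimage_image_coe, isOpen_image_coe]
    exact hU.isOpenMap_subtype_val _ ((isOpen_iff_of_notMem h).1 hs)

lemma isClosedMap_collapse [LocallyCompactSpace X] [T2Space X] (hU : IsOpen U) :
    IsClosedMap (collapse U) :=
  have := hU.locallyCompactSpace
  (continuous_collapse hU).isClosedMap

end OnePoint

theorem stmt8 (Ω G : Set ℂ) (hΩ : IsOpen Ω) (hΩc : IsConnected (sphereCompl Ω))
    (hG : G ⊆ Ω) (h : IsConnected (ocCompl Ω G)) :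
    IsConnected (sphereCompl G) := by
  have hpre : OnePoint.collapse Ω ⁻¹' ocCompl Ω G = sphereCompl G := by
    rw [ocCompl, preimage_compl, OnePoint.collapse_preimage_image_coe, sphereCompl]
    exact congrArg (fun V => (OnePoint.some '' V)ᶜ)
      ((Subtype.image_preimage_coe Ω G).trans (inter_eq_right.2 hG))
  rw [← hpre]
  refine h.preimage_of_isClosedMap_of_isConnected_fiber (OnePoint.isClosedMap_collapse hΩ)
    fun y _ => ?_
  induction y with
  | infty => rwa [OnePoint.collapse_preimage_infty]
  | coe x => rw [OnePoint.collapse_preimage_coe]; exact isConnected_singleton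

end
end
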